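/- In the stochastic tabular setting, let π be a policy with R̄(π) > −∞. If there exists a state s₁ with d(s₁) > 0 and an action ã with π(ã|s₁) > 0 and β(ã|s₁) = 0 (i.e., π is not constrained within the support of the behavior policy at some state in the support of d), then R̄(π_in) > R̄(π). -/

import Mathlib

open scoped BigOperators Classical

/-- Extended-real logarithm of a (nonnegative) real number, with `elog 0 = ⊥` (i.e. `log 0 = -∞`).
Note that in `EReal` we have `0 * ⊥ = 0`, matching the convention `0·(−∞) = 0`. -/
noncomputable def elog (x : ℝ) : EReal := if x = 0 then ⊥ else ((Real.log x : ℝ) : EReal)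

/-- The regularizer
`R̄(π) = Σ_s d(s)·Σ_{s'} N(s'|s)·(exp(α V(s'))/Z(s))·log(Σ_a M(s'|s,a)·π(a|s))`,
valued in the extended reals. -/
noncomputable def RbarSto {S A : Type*} [Fintype S] [Fintype A]
    (d : S → ℝ) (N : S → S → ℝ) (V : S → ℝ) (α : ℝ) (Z : S → ℝ)
    (M : S → A → S → ℝ) (π : S → A → ℝ) : EReal :=
  ∑ s, (d s : EReal) *
    ∑ s', ((N s s' * (Real.exp (α * V s') / Z s) : ℝ) : EReal) *
      elog (∑ a, M s a s' * π s a)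

/-!
Moving the off-support mass `ε(s)` of `π` onto the support of `β` never decreases the next-state
mass `Σ_a M(s'|s,a) π(a|s)`: the actions it is taken from have `M(·|s,a) = 0`. At `s₁` the mass
strictly increases at a successor `s₂` of an in-support action `a₀`, and this `s₂` has positive
tilted weight `N(s₂|s₁) exp(α V(s₂)) / Z(s₁)`. Since `log` is strictly increasing on `[0, ∞)`
(with `log 0 = −∞`) and `R̄(π)` is finite, every summand of `R̄(π)` is finite, so the strict
increase of one summand with positive weight survives both weighted sums.
-/

open Finset

namespace EReal

variable {ι : Type*} {s : Finset ι} {f g : ι → EReal}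

lemma sum_ne_top (h : ∀ i ∈ s, f i ≠ ⊤) : ∑ i ∈ s, f i ≠ ⊤ := by
  induction s using Finset.cons_induction with
  | empty => simp
  | cons a s _ ih =>
    rw [sum_cons]
    exact add_ne_top (h a (mem_cons_self a s)) (ih fun i hi => h i (mem_cons_of_mem hi))

lemma bot_lt_of_bot_lt_sum (h : ⊥ < ∑ j ∈ s, f j) {i : ι} (hi : i ∈ s) : ⊥ < f i := by
  refine bot_lt_iff_ne_bot.2 fun hf => h.ne' ?_
  rw [← add_sum_erase s f hi, hf, bot_add]

lemma sum_lt_sum_of_bot_lt (hfg : ∀ i ∈ s, f i ≤ g i) (hbot : ⊥ < ∑ i ∈ s, f i)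
    (htop : ∀ i ∈ s, f i ≠ ⊤) {j : ι} (hj : j ∈ s) (hlt : f j < g j) :
    ∑ i ∈ s, f i < ∑ i ∈ s, g i := by
  rw [← add_sum_erase s f hj] at hbot ⊢
  rw [← add_sum_erase s g hj]
  have hrest : ∑ i ∈ s.erase j, f i ≤ ∑ i ∈ s.erase j, g i :=
    sum_le_sum fun i hi => hfg i (mem_of_mem_erase hi)
  have hrest_bot : ∑ i ∈ s.erase j, f i ≠ ⊥ := fun h => by simp [h] at hbot
  have hrest_top : ∑ i ∈ s.erase j, f i ≠ ⊤ :=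
    sum_ne_top fun i hi => htop i (mem_of_mem_erase hi)
  exact add_lt_add_of_lt_of_le' hlt hrest (ne_bot_of_le_ne_bot hrest_bot hrest)
    fun _ h => absurd h hrest_top

variable {c : ℝ} {y z : EReal}

lemma coe_mul_le_coe_mul (hc : 0 ≤ c) (h : y ≤ z) : (c : EReal) * y ≤ c * z :=
  mul_le_mul_of_nonneg_left h (EReal.coe_nonneg.2 hc)

lemma coe_mul_lt_coe_mul (hc : 0 < c) (h : y < z) : (c : EReal) * y < c * z := by
  induction y <;> induction z <;>
    simp_all [coe_mul_bot_of_pos hc, coe_mul_top_of_pos hc, ← coe_mul]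

lemma coe_mul_ne_top (hc : 0 ≤ c) (hy : y ≠ ⊤) : (c : EReal) * y ≠ ⊤ :=
  (mul_ne_top _ _).2
    ⟨Or.inl (coe_ne_bot c), Or.inl (EReal.coe_nonneg.2 hc), Or.inl (coe_ne_top c), Or.inr hy⟩

lemma bot_lt_of_bot_lt_coe_mul (hc : 0 < c) (h : ⊥ < (c : EReal) * y) : ⊥ < y := by
  refine bot_lt_iff_ne_bot.2 fun hy => ?_
  rw [hy, coe_mul_bot_of_pos hc] at h
  exact h.false

lemma sum_coe_mul_lt_sum_coe_mul {w : ι → ℝ} (hw : ∀ i ∈ s, 0 ≤ w i)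
    (hfg : ∀ i ∈ s, f i ≤ g i) (hf : ∀ i ∈ s, f i ≠ ⊤)
    (hbot : ⊥ < ∑ i ∈ s, (w i : EReal) * f i) {j : ι} (hj : j ∈ s) (hwj : 0 < w j)
    (hlt : f j < g j) : ∑ i ∈ s, (w i : EReal) * f i < ∑ i ∈ s, (w i : EReal) * g i :=
  sum_lt_sum_of_bot_lt (fun i hi => coe_mul_le_coe_mul (hw i hi) (hfg i hi)) hbot
    (fun i hi => coe_mul_ne_top (hw i hi) (hf i hi)) hj (coe_mul_lt_coe_mul hwj hlt)

end EReal

lemma elog_ne_top (x : ℝ) : elog x ≠ ⊤ := by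
  unfold elog
  split_ifs <;> simp

lemma elog_le_elog {x y : ℝ} (hx : 0 ≤ x) (h : x ≤ y) : elog x ≤ elog y := by
  rcases hx.eq_or_lt with rfl | hx
  · simp [elog]
  · rw [elog, elog, if_neg hx.ne', if_neg (hx.trans_le h).ne', EReal.coe_le_coe_iff]
    exact Real.log_le_log hx h

lemma elog_lt_elog {x y : ℝ} (hx : 0 ≤ x) (h : x < y) : elog x < elog y := by
  rw [elog, elog, if_neg (hx.trans_lt h).ne']
  split_ifs with hx0
  · exact EReal.bot_lt_coe _
  · exact EReal.coe_lt_coe_iff.2 (Real.log_lt_log (hx.lt_of_ne' hx0) h)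

lemma exists_pos_of_sum_eq_one {ι : Type*} [Fintype ι] {p : ι → ℝ} (h0 : ∀ i, 0 ≤ p i)
    (h1 : ∑ i, p i = 1) : ∃ i, 0 < p i := by
  obtain ⟨i, -, hi⟩ := exists_ne_zero_of_sum_ne_zero (h1 ▸ one_ne_zero : ∑ i, p i ≠ 0)
  exact ⟨i, (h0 i).lt_of_ne' hi⟩

theorem RbarSto_lt_RbarSto {S A : Type*} [Fintype S] [Fintype A] {d : S → ℝ} {N : S → S → ℝ}
    {V : S → ℝ} {α : ℝ} {Z : S → ℝ} {M : S → A → S → ℝ} {π π' : S → A → ℝ}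
    (hd0 : ∀ s, 0 ≤ d s) (hw0 : ∀ s s', 0 ≤ N s s' * (Real.exp (α * V s') / Z s))
    (hmass0 : ∀ s s', 0 ≤ ∑ a, M s a s' * π s a)
    (hmass : ∀ s s', ∑ a, M s a s' * π s a ≤ ∑ a, M s a s' * π' s a)
    (hfin : ⊥ < RbarSto d N V α Z M π) {s₁ s₂ : S} (hd : 0 < d s₁)
    (hw : 0 < N s₁ s₂ * (Real.exp (α * V s₂) / Z s₁))
    (hlt : ∑ a, M s₁ a s₂ * π s₁ a < ∑ a, M s₁ a s₂ * π' s₁ a) :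
    RbarSto d N V α Z M π < RbarSto d N V α Z M π' := by
  have helog : ∀ s s', elog (∑ a, M s a s' * π s a) ≤ elog (∑ a, M s a s' * π' s a) :=
    fun s s' => elog_le_elog (hmass0 s s') (hmass s s')
  have hinner_lt := EReal.sum_coe_mul_lt_sum_coe_mul (fun s' _ => hw0 s₁ s')
    (fun s' _ => helog s₁ s') (fun s' _ => elog_ne_top _)
    (EReal.bot_lt_of_bot_lt_coe_mul hd (EReal.bot_lt_of_bot_lt_sum hfin (mem_univ s₁)))
    (mem_univ s₂) hw (elog_lt_elog (hmass0 s₁ s₂) hlt)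
  exact EReal.sum_coe_mul_lt_sum_coe_mul (fun s _ => hd0 s)
    (fun s _ => sum_le_sum fun s' _ => EReal.coe_mul_le_coe_mul (hw0 s s') (helog s s'))
    (fun s _ => EReal.sum_ne_top fun s' _ => EReal.coe_mul_ne_top (hw0 s s') (elog_ne_top _))
    hfin (mem_univ s₁) hd hinner_lt

section ProjectedPolicy

variable {A : Type*} {β M π πin : A → ℝ} {c : ℝ}

lemma mul_le_mul_projected (hβ0 : ∀ a, 0 ≤ β a) (hM0 : ∀ a, 0 ≤ M a)
    (hMzero : ∀ a, β a = 0 → M a = 0) (hc : 0 ≤ c)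
    (hπin : ∀ a, πin a = if 0 < β a then π a + c else 0) (a : A) :
    M a * π a ≤ M a * πin a := by
  rcases (hβ0 a).lt_or_eq with hβ | hβ
  · rw [hπin a, if_pos hβ]
    exact mul_le_mul_of_nonneg_left (le_add_of_nonneg_right hc) (hM0 a)
  · simp [hMzero a hβ.symm]

lemma sum_mul_le_sum_mul_projected [Fintype A] (hβ0 : ∀ a, 0 ≤ β a) (hM0 : ∀ a, 0 ≤ M a)
    (hMzero : ∀ a, β a = 0 → M a = 0) (hc : 0 ≤ c)
    (hπin : ∀ a, πin a = if 0 < β a then π a + c else 0) :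
    ∑ a, M a * π a ≤ ∑ a, M a * πin a :=
  sum_le_sum fun a _ => mul_le_mul_projected hβ0 hM0 hMzero hc hπin a

lemma sum_mul_lt_sum_mul_projected [Fintype A] (hβ0 : ∀ a, 0 ≤ β a) (hM0 : ∀ a, 0 ≤ M a)
    (hMzero : ∀ a, β a = 0 → M a = 0) (hc : 0 < c)
    (hπin : ∀ a, πin a = if 0 < β a then π a + c else 0) {a₀ : A} (hβa₀ : 0 < β a₀)
    (hMa₀ : 0 < M a₀) : ∑ a, M a * π a < ∑ a, M a * πin a := by
  refine sum_lt_sum (fun a _ => mul_le_mul_projected hβ0 hM0 hMzero hc.le hπin a)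
    ⟨a₀, mem_univ a₀, ?_⟩
  rw [hπin a₀, if_pos hβa₀]
  exact mul_lt_mul_of_pos_left (lt_add_of_pos_right _ hc) hMa₀

end ProjectedPolicy

section TiltedWeight

variable {S A : Type*} [Fintype S] [Fintype A] {β : S → A → ℝ} {M : S → A → S → ℝ}
  {N : S → S → ℝ} {V : S → ℝ} {α : ℝ} {Z : S → ℝ}

lemma tiltedWeight_nonneg (hβ0 : ∀ s a, 0 ≤ β s a) (hM0 : ∀ s a s', 0 ≤ M s a s')
    (hN : ∀ s s', N s s' = ∑ a, β s a * M s a s')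
    (hZ : ∀ s, Z s = ∑ s', Real.exp (α * V s') * N s s') (s s' : S) :
    0 ≤ N s s' * (Real.exp (α * V s') / Z s) := by
  have hN0 : ∀ s s', 0 ≤ N s s' := fun s s' =>
    hN s s' ▸ sum_nonneg fun a _ => mul_nonneg (hβ0 s a) (hM0 s a s')
  have hZ0 : 0 ≤ Z s := hZ s ▸ sum_nonneg fun t _ => mul_nonneg (Real.exp_nonneg _) (hN0 s t)
  exact mul_nonneg (hN0 s s') (div_nonneg (Real.exp_nonneg _) hZ0)

lemma tiltedWeight_pos (hβ0 : ∀ s a, 0 ≤ β s a) (hM0 : ∀ s a s', 0 ≤ M s a s')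
    (hN : ∀ s s', N s s' = ∑ a, β s a * M s a s')
    (hZ : ∀ s, Z s = ∑ s', Real.exp (α * V s') * N s s') {s s' : S} {a : A}
    (hβ : 0 < β s a) (hM : 0 < M s a s') :
    0 < N s s' * (Real.exp (α * V s') / Z s) := by
  have hN0 : ∀ t, 0 ≤ N s t := fun t =>
    hN s t ▸ sum_nonneg fun b _ => mul_nonneg (hβ0 s b) (hM0 s b t)
  have hNpos : 0 < N s s' :=
    hN s s' ▸ sum_pos' (fun b _ => mul_nonneg (hβ0 s b) (hM0 s b s'))
      ⟨a, mem_univ a, mul_pos hβ hM⟩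
  have hZpos : 0 < Z s :=
    hZ s ▸ sum_pos' (fun t _ => mul_nonneg (Real.exp_nonneg _) (hN0 t))
      ⟨s', mem_univ s', mul_pos (Real.exp_pos _) hNpos⟩
  exact mul_pos hNpos (div_pos (Real.exp_pos _) hZpos)

end TiltedWeight

theorem stmt13_general {S A : Type*} [Fintype S] [Fintype A]
    (d : S → ℝ) (hd0 : ∀ s, 0 ≤ d s)
    (β : S → A → ℝ) (hβ0 : ∀ s a, 0 ≤ β s a) (hβ1 : ∀ s, ∑ a, β s a = 1)
    (M : S → A → S → ℝ) (hM0 : ∀ s a s', 0 ≤ M s a s')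
    (hMzero : ∀ s a, β s a = 0 → ∀ s', M s a s' = 0)
    (hMpmf : ∀ s a, 0 < β s a → ∑ s', M s a s' = 1)
    (N : S → S → ℝ) (hN : ∀ s s', N s s' = ∑ a, β s a * M s a s')
    (V : S → ℝ) (α : ℝ)
    (Z : S → ℝ) (hZ : ∀ s, Z s = ∑ s', Real.exp (α * V s') * N s s')
    (π : S → A → ℝ) (hπ0 : ∀ s a, 0 ≤ π s a)
    (ε : S → ℝ) (hε : ∀ s, ε s = ∑ a ∈ Finset.univ.filter (fun a => β s a = 0), π s a)
    (n : S → ℕ) (hn : ∀ s, n s = (Finset.univ.filter (fun a => 0 < β s a)).card)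
    (πin : S → A → ℝ)
    (hπin : ∀ s a, πin s a = if 0 < β s a then π s a + ε s / n s else 0)
    (hfin : (⊥ : EReal) < RbarSto d N V α Z M π)
    (s₁ : S) (hs₁ : 0 < d s₁)
    (atil : A) (hπatil : 0 < π s₁ atil) (hβatil : β s₁ atil = 0) :
    RbarSto d N V α Z M π < RbarSto d N V α Z M πin := by
  obtain ⟨a₀, hβa₀⟩ := exists_pos_of_sum_eq_one (hβ0 s₁) (hβ1 s₁)
  obtain ⟨s₂, hMs₂⟩ := exists_pos_of_sum_eq_one (hM0 s₁ a₀) (hMpmf s₁ a₀ hβa₀)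
  have hc : ∀ s, 0 ≤ ε s / n s := fun s =>
    div_nonneg (hε s ▸ sum_nonneg fun a _ => hπ0 s a) (Nat.cast_nonneg _)
  have hε₁ : 0 < ε s₁ :=
    hε s₁ ▸ sum_pos' (fun a _ => hπ0 s₁ a) ⟨atil, by simp [hβatil], hπatil⟩
  have hn₁ : 0 < n s₁ := hn s₁ ▸ card_pos.2 ⟨a₀, by simp [hβa₀]⟩
  exact RbarSto_lt_RbarSto hd0 (tiltedWeight_nonneg hβ0 hM0 hN hZ)
    (fun s s' => sum_nonneg fun a _ => mul_nonneg (hM0 s a s') (hπ0 s a))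
    (fun s s' => sum_mul_le_sum_mul_projected (hβ0 s) (hM0 s · s') (fun a h => hMzero s a h s')
      (hc s) (hπin s))
    hfin hs₁ (tiltedWeight_pos hβ0 hM0 hN hZ hβa₀ hMs₂)
    (sum_mul_lt_sum_mul_projected (hβ0 s₁) (hM0 s₁ · s₂) (fun a h => hMzero s₁ a h s₂)
      (div_pos hε₁ (Nat.cast_pos.2 hn₁)) (hπin s₁) hβa₀ hMs₂)

/-- in the stochastic tabular setting, if `R̄(π) > −∞` and `π` takes an action
outside the support of `β` with positive probability at some state in the support of `d`, then
the projected policy `π_in` strictly improves the regularizer: `R̄(π_in) > R̄(π)`. -/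
theorem stmt13 {S A : Type*} [Fintype S] [Fintype A] [Nonempty S] [Nonempty A]
    (d : S → ℝ) (hd0 : ∀ s, 0 ≤ d s) (hd1 : ∑ s, d s = 1)
    (β : S → A → ℝ) (hβ0 : ∀ s a, 0 ≤ β s a) (hβ1 : ∀ s, ∑ a, β s a = 1)
    (M : S → A → S → ℝ) (hM0 : ∀ s a s', 0 ≤ M s a s')
    (hMzero : ∀ s a, β s a = 0 → ∀ s', M s a s' = 0)
    (hMpmf : ∀ s a, 0 < β s a → ∑ s', M s a s' = 1)
    (N : S → S → ℝ) (hN : ∀ s s', N s s' = ∑ a, β s a * M s a s')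
    (V : S → ℝ) (α : ℝ)
    (Z : S → ℝ) (hZ : ∀ s, Z s = ∑ s', Real.exp (α * V s') * N s s')
    (π : S → A → ℝ) (hπ0 : ∀ s a, 0 ≤ π s a) (hπ1 : ∀ s, ∑ a, π s a = 1)
    (ε : S → ℝ) (hε : ∀ s, ε s = ∑ a ∈ Finset.univ.filter (fun a => β s a = 0), π s a)
    (n : S → ℕ) (hn : ∀ s, n s = (Finset.univ.filter (fun a => 0 < β s a)).card)
    (πin : S → A → ℝ)
    (hπin : ∀ s a, πin s a = if 0 < β s a then π s a + ε s / n s else 0)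
    (hfin : (⊥ : EReal) < RbarSto d N V α Z M π)
    (s₁ : S) (hs₁ : 0 < d s₁)
    (atil : A) (hπatil : 0 < π s₁ atil) (hβatil : β s₁ atil = 0) :
    RbarSto d N V α Z M π < RbarSto d N V α Z M πin :=
  stmt13_general d hd0 β hβ0 hβ1 M hM0 hMzero hMpmf N hN V α Z hZ π hπ0 ε hε n hn πin hπin hfin s₁
    hs₁ atil hπatil hβatil
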